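/- arXiv:1505.05001 — 4 statements merged into one kernel-verified Lean document; each statement's English description precedes it below -/
import Mathlib

section
/- Let C be a class of groups closed under taking subgroups and under taking finite direct products, and assume that every free-by-C group is residually C. Let B ≤ A and C₀ be groups such that A and C₀ are residually C and B is C-closed in A. Then the special amalgam G = A ⋆_B C₀ is residually C. -/
universe u

open Monoid

/-- A group `G` is *residually `C`*: every nontrivial element survives in a
surjective homomorphic image lying in the class `C`. -/
def ResiduallyC (C : ∀ (G : Type u) [Group G], Prop) (G : Type u) [Group G] : Prop :=
  ∀ g : G, g ≠ 1 → ∃ (Q : Type u) (_ : Group Q) (φ : G →* Q),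
    C Q ∧ Function.Surjective φ ∧ φ g ≠ 1
/-- The special amalgam `A ⋆_B C₀ = A ∗_B (B × C₀)`: the pushout of the
inclusion `B → A` and the homomorphism `B → B × C₀`, `b ↦ (b, 1)`, realised
as the quotient of the coproduct `A ∗ (B × C₀)` by the normal closure of the
elements identifying the two copies of `B`. -/
def SpecialAmalgam (A : Type u) [Group A] (B : Subgroup A) (C₀ : Type u) [Group C₀] :
    Type u :=
  (Monoid.Coprod A (B × C₀)) ⧸ Subgroup.normalClosure
    { x : Monoid.Coprod A (B × C₀) |
        ∃ b : B, x = Coprod.inl (b : A) * (Coprod.inr ((b, 1) : B × C₀))⁻¹ }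

instance (A : Type u) [Group A] (B : Subgroup A) (C₀ : Type u) [Group C₀] :
    Group (SpecialAmalgam A B C₀) :=
  QuotientGroup.Quotient.group _

/-- The canonical homomorphism `A → A ⋆_B C₀`. -/
def SpecialAmalgam.ofA (A : Type u) [Group A] (B : Subgroup A) (C₀ : Type u) [Group C₀] :
    A →* SpecialAmalgam A B C₀ :=
  (QuotientGroup.mk' _).comp Coprod.inl

/-- The canonical homomorphism `C₀ → A ⋆_B C₀`. -/
def SpecialAmalgam.ofC (A : Type u) [Group A] (B : Subgroup A) (C₀ : Type u) [Group C₀] :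
    C₀ →* SpecialAmalgam A B C₀ :=
  (QuotientGroup.mk' _).comp ((Coprod.inr).comp (MonoidHom.inr B C₀))
/-- A subset `X ⊆ G` is *`C`-closed* in `G`: every `g ∉ X` can be separated
from `X` in a surjective homomorphic image lying in `C`. -/
def CClosed (C : ∀ (G : Type u) [Group G], Prop) {G : Type u} [Group G] (X : Set G) : Prop :=
  ∀ g ∉ X, ∃ (Q : Type u) (_ : Group Q) (φ : G →* Q),
    C Q ∧ Function.Surjective φ ∧ φ g ∉ φ '' X

/-!
Write `g ≠ 1` in `A ⋆_B C₀` as an alternating product `a₁ c₁ ⋯ aₙ cₙ a` with `cᵢ ≠ 1` and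
`aᵢ ∉ B` for `i ≥ 2`. For `n = 0`, `g` lies in `A` and the retraction onto `A` detects it.
Otherwise choose `φ : A → Q` and `ψ : C₀ → R` with `Q, R ∈ C` such that `φ aᵢ ∉ φ B` and
`ψ cᵢ ≠ 1`; finitely many conditions can be met at once inside a product. The amalgam maps
to `F ⋊ (Q × R)`, with `F` free on `(Q ⧸ φ B) × R`: `A` acts through `Q`, and `C₀` through `R`
twisted by a cocycle. The free part of the image of `g` is a reduced nonempty word, so the image
of `g` is nontrivial; and the image of the amalgam meets `F` in a free group with quotient a
subgroup of `Q × R`, so it is free-by-`C` and hence residually `C`.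
-/

section Separation

variable {C : ∀ (G : Type u) [Group G], Prop} {G : Type u} [Group G]

theorem ResiduallyC.cClosed_one (h : ResiduallyC C G) : CClosed C ({1} : Set G) := by
  intro g hg
  obtain ⟨Q, _, φ, hQ, hφ, hg⟩ := h g hg
  exact ⟨Q, _, φ, hQ, hφ, by simpa using hg⟩

theorem ResiduallyC.exists_of_map {H : Type u} [Group H] (hH : ResiduallyC C H) {f : G →* H}
    (hf : Function.Surjective f) {g : G} (hg : f g ≠ 1) :
    ∃ (Q : Type u) (_ : Group Q) (φ : G →* Q), C Q ∧ Function.Surjective φ ∧ φ g ≠ 1 := by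
  obtain ⟨Q, _, φ, hQ, hφ, hfg⟩ := hH (f g) hg
  exact ⟨Q, _, φ.comp f, hQ, hφ.comp hf, hfg⟩

/-- The group `X` only witnesses that `C` is nonempty, which the empty list needs. -/
theorem CClosed.exists_forall_list
    (hSub : ∀ (G : Type u) [Group G] (H : Subgroup G), C G → C H)
    (hProd : ∀ (G H : Type u) [Group G] [Group H], C G → C H → C (G × H))
    {X : Type u} [Group X] (hX : C X) {S : Set G} (hS : CClosed C S) :
    ∀ l : List G, (∀ g ∈ l, g ∉ S) → ∃ (Q : Type u) (_ : Group Q) (φ : G →* Q),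
      C Q ∧ Function.Surjective φ ∧ ∀ g ∈ l, φ g ∉ φ '' S
  | [], _ => ⟨(⊥ : Subgroup X), inferInstance, 1, hSub X ⊥ hX,
      fun _ => ⟨1, Subsingleton.elim _ _⟩, by simp⟩
  | g :: l, hl => by
    obtain ⟨Q₁, _, φ₁, hQ₁, -, hg⟩ := hS g (hl g List.mem_cons_self)
    obtain ⟨Q₂, _, φ₂, hQ₂, -, hl⟩ :=
      hS.exists_forall_list hSub hProd hX l fun g' hg' => hl g' (List.mem_cons_of_mem _ hg')
    refine ⟨(φ₁.prod φ₂).range, inferInstance, (φ₁.prod φ₂).rangeRestrict,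
      hSub _ _ (hProd _ _ hQ₁ hQ₂), MonoidHom.rangeRestrict_surjective _, ?_⟩
    rintro g' hg' ⟨s, hs, hsg⟩
    have hsg : φ₁ s = φ₁ g' ∧ φ₂ s = φ₂ g' := by simpa using congrArg Subtype.val hsg
    rcases List.mem_cons.mp hg' with rfl | hg'
    · exact hg ⟨s, hs, hsg.1⟩
    · exact hl g' hg' ⟨s, hs, hsg.2⟩

end Separation

section FreeByC

variable {N K : Type u} [Group N] [Group K] {ϕ : K →* MulAut N}

theorem SemidirectProduct.isFreeGroup_of_le_ker_rightHom [IsFreeGroup N]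
    {M : Subgroup (N ⋊[ϕ] K)} (hM : M ≤ SemidirectProduct.rightHom.ker) : IsFreeGroup M := by
  have : IsFreeGroup (SemidirectProduct.inl : N →* N ⋊[ϕ] K).range :=
    .ofMulEquiv (MonoidHom.ofInjective SemidirectProduct.inl_injective)
  rw [← SemidirectProduct.range_inl_eq_ker_rightHom] at hM
  exact .ofMulEquiv (Subgroup.subgroupOfEquivOfLe hM)

theorem SemidirectProduct.residuallyC_subgroup {C : ∀ (G : Type u) [Group G], Prop}
    (hIso : ∀ (G H : Type u) [Group G] [Group H], G ≃* H → C G → C H)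
    (hSub : ∀ (G : Type u) [Group G] (H : Subgroup G), C G → C H)
    (hFree : ∀ (G : Type u) [Group G],
      (∃ (N : Subgroup G) (_ : N.Normal), IsFreeGroup N ∧ C (G ⧸ N)) → ResiduallyC C G)
    [IsFreeGroup N] (hK : C K) (H : Subgroup (N ⋊[ϕ] K)) : ResiduallyC C H := by
  set ρ := SemidirectProduct.rightHom.comp H.subtype
  refine hFree H ⟨ρ.ker, inferInstance, ?_,
    hIso _ _ (QuotientGroup.quotientKerEquivRange ρ).symm (hSub _ _ hK)⟩
  have : IsFreeGroup (ρ.ker.map H.subtype) :=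
    SemidirectProduct.isFreeGroup_of_le_ker_rightHom (by rintro _ ⟨x, hx, rfl⟩; exact hx)
  exact .ofMulEquiv (ρ.ker.equivMapOfInjective _ H.subtype_injective).symm

end FreeByC

namespace SpecialAmalgam

variable {A C₀ : Type u} [Group A] [Group C₀] {B : Subgroup A}

def mk : Coprod A (B × C₀) →* SpecialAmalgam A B C₀ := QuotientGroup.mk' _

theorem mk_surjective : Function.Surjective (mk : Coprod A (B × C₀) →* SpecialAmalgam A B C₀) :=
  QuotientGroup.mk'_surjective _

theorem ofA_eq_mk_inr (b : B) : ofA A B C₀ b = mk (Coprod.inr (b, 1)) :=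
  QuotientGroup.eq_iff_div_mem.mpr (Subgroup.subset_normalClosure ⟨b, div_eq_mul_inv _ _⟩)

theorem mk_inr (x : B × C₀) : mk (Coprod.inr x) = ofA A B C₀ x.1 * ofC A B C₀ x.2 := by
  rw [ofA_eq_mk_inr, show ofC A B C₀ x.2 = mk (Coprod.inr (1, x.2)) from rfl, ← map_mul,
    ← map_mul]
  simp

theorem ofA_commute_ofC {b : A} (hb : b ∈ B) (c : C₀) :
    Commute (ofA A B C₀ b) (ofC A B C₀ c) := by
  have h : Commute ((⟨b, hb⟩, 1) : B × C₀) (1, c) := by ext <;> simp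
  rw [show b = ((⟨b, hb⟩ : B) : A) from rfl, ofA_eq_mk_inr]
  exact h.map (mk.comp Coprod.inr)

theorem induction_on {P : SpecialAmalgam A B C₀ → Prop} (g : SpecialAmalgam A B C₀) (one : P 1)
    (ofA_mul : ∀ a g, P g → P (ofA A B C₀ a * g)) (ofC_mul : ∀ c g, P g → P (ofC A B C₀ c * g)) :
    P g := by
  obtain ⟨w, rfl⟩ := mk_surjective g
  suffices h : ∀ t, P t → P (mk w * t) by simpa using h 1 one
  induction w using Coprod.induction_on with
  | inl a => exact ofA_mul a
  | inr x => intro t ht; rw [mk_inr, mul_assoc]; exact ofA_mul _ _ (ofC_mul _ _ ht)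
  | mul x y hx hy => intro t ht; rw [map_mul, mul_assoc]; exact hx _ (hy t ht)

variable {M : Type*} [Group M]

def lift (f : A →* M) (g : C₀ →* M) (hfg : ∀ b ∈ B, ∀ c, Commute (f b) (g c)) :
    SpecialAmalgam A B C₀ →* M :=
  QuotientGroup.lift _
    (Coprod.lift f ((f.comp B.subtype).noncommCoprod g fun b c => hfg b b.2 c)) <|
    Subgroup.normalClosure_le_normal <| by
      rintro _ ⟨b, rfl⟩
      rw [SetLike.mem_coe, MonoidHom.mem_ker, map_mul, map_inv, Coprod.lift_apply_inl,
        Coprod.lift_apply_inr]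
      change f b * (f b * g 1)⁻¹ = 1
      simp

@[simp]
theorem lift_ofA (f : A →* M) (g : C₀ →* M) (hfg : ∀ b ∈ B, ∀ c, Commute (f b) (g c)) (a : A) :
    lift f g hfg (ofA A B C₀ a) = f a :=
  (QuotientGroup.lift_mk' _ _ _).trans (Coprod.lift_apply_inl _ _ a)

@[simp]
theorem lift_ofC (f : A →* M) (g : C₀ →* M) (hfg : ∀ b ∈ B, ∀ c, Commute (f b) (g c)) (c : C₀) :
    lift f g hfg (ofC A B C₀ c) = g c := by
  refine (QuotientGroup.lift_mk' _ _ (Coprod.inr (1, c))).trans ?_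
  change f 1 * g c = g c
  simp

def projA : SpecialAmalgam A B C₀ →* A :=
  lift (MonoidHom.id A) 1 fun _ _ _ => Commute.one_right _

@[simp]
theorem projA_ofA (a : A) : projA (ofA A B C₀ a) = a :=
  lift_ofA _ _ _ a

theorem projA_surjective : Function.Surjective (projA : SpecialAmalgam A B C₀ →* A) :=
  fun a => ⟨ofA A B C₀ a, projA_ofA a⟩

variable (B) in
def alternatingProd (L : List (A × C₀)) (a : A) : SpecialAmalgam A B C₀ :=
  (L.map fun p => ofA A B C₀ p.1 * ofC A B C₀ p.2).prod * ofA A B C₀ a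

@[simp]
theorem alternatingProd_nil (a : A) : alternatingProd B ([] : List (A × C₀)) a = ofA A B C₀ a := by
  simp [alternatingProd]

variable (B) in
def IsReduced (L : List (A × C₀)) : Prop :=
  (∀ p ∈ L, p.2 ≠ 1) ∧ ∀ p ∈ L.tail, p.1 ∉ B

theorem exists_ofA_mul_alternatingProd (a' : A) {L : List (A × C₀)} (hL : IsReduced B L)
    (a : A) : ∃ L' a'', IsReduced B L' ∧
      ofA A B C₀ a' * alternatingProd B L a = alternatingProd B L' a'' := by
  cases L with
  | nil => exact ⟨[], a' * a, by simp [IsReduced], by simp [alternatingProd]⟩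
  | cons p L =>
    refine ⟨(a' * p.1, p.2) :: L, a, ⟨?_, hL.2⟩, by simp [alternatingProd, mul_assoc]⟩
    simpa using hL.1

theorem exists_ofC_mul_alternatingProd (c : C₀) {L : List (A × C₀)} (hL : IsReduced B L)
    (a : A) : ∃ L' a'', IsReduced B L' ∧
      ofC A B C₀ c * alternatingProd B L a = alternatingProd B L' a'' := by
  by_cases hc : c = 1
  · exact ⟨L, a, hL, by simp [hc]⟩
  cases L with
  | nil => exact ⟨[(1, c)], a, by simp [IsReduced, hc], by simp [alternatingProd]⟩
  | cons p L =>
    by_cases hp : p.1 ∈ B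
    · have key : ofC A B C₀ c * alternatingProd B (p :: L) a =
          ofA A B C₀ p.1 * (ofC A B C₀ (c * p.2) * alternatingProd B L a) := by
        simp only [alternatingProd, List.map_cons, List.prod_cons, map_mul, ← mul_assoc,
          (ofA_commute_ofC hp c).eq]
      have hL' : IsReduced B L := ⟨fun q hq => hL.1 q (List.mem_cons_of_mem _ hq),
        fun q hq => hL.2 q (List.mem_of_mem_tail hq)⟩
      by_cases hcp : c * p.2 = 1
      · rw [key, hcp, map_one, one_mul]
        exact exists_ofA_mul_alternatingProd p.1 hL' a
      · refine ⟨(p.1, c * p.2) :: L, a, ⟨?_, hL.2⟩, ?_⟩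
        · simpa [hcp] using hL'.1
        · rw [key]; simp [alternatingProd, mul_assoc]
    · refine ⟨(1, c) :: p :: L, a, ⟨?_, ?_⟩, by simp [alternatingProd, mul_assoc]⟩
      · simpa [hc] using hL.1
      · simpa [hp] using hL.2

theorem exists_eq_alternatingProd (g : SpecialAmalgam A B C₀) :
    ∃ L a, IsReduced B L ∧ g = alternatingProd B L a := by
  induction g using induction_on with
  | one => exact ⟨[], 1, by simp [IsReduced], by simp [alternatingProd]⟩
  | ofA_mul a' g ih =>
    obtain ⟨L, a, hL, rfl⟩ := ih
    exact exists_ofA_mul_alternatingProd a' hL a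
  | ofC_mul c g ih =>
    obtain ⟨L, a, hL, rfl⟩ := ih
    exact exists_ofC_mul_alternatingProd c hL a

end SpecialAmalgam

theorem FreeGroup.of_mul_inv_of_mul_mk {α : Type*} (x y : α) (L : List (α × Bool)) :
    of x * (of y)⁻¹ * mk L = mk ((x, true) :: (y, false) :: L) := by
  rw [of, of, inv_mk, mul_mk, mul_mk]
  rfl

def FreeGroup.congrHom (α : Type*) : Equiv.Perm α →* MulAut (FreeGroup α) where
  toFun := FreeGroup.freeGroupCongr
  map_one' := FreeGroup.freeGroupCongr_refl
  map_mul' e f := (FreeGroup.freeGroupCongr_trans f e).symm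

namespace CosetSemidirect

variable {Q : Type u} [Group Q] (H : Subgroup Q) (R : Type u) [Group R]

def act : Q × R →* MulAut (FreeGroup ((Q ⧸ H) × R)) :=
  (FreeGroup.congrHom _).comp
    { toFun := fun p => (MulAction.toPerm p.1).prodCongr (Equiv.mulLeft p.2)
      map_one' := by ext <;> simp
      map_mul' := fun p q => by ext <;> simp [mul_smul, mul_assoc] }

@[simp]
theorem act_of (p : Q × R) (s : (Q ⧸ H) × R) :
    act H R p (FreeGroup.of s) = FreeGroup.of (p.1 • s.1, p.2 * s.2) := by
  simp [act, FreeGroup.congrHom, Prod.map]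

end CosetSemidirect

abbrev CosetSemidirect {Q : Type u} [Group Q] (H : Subgroup Q) (R : Type u) [Group R] : Type u :=
  FreeGroup ((Q ⧸ H) × R) ⋊[CosetSemidirect.act H R] (Q × R)

namespace CosetSemidirect

variable {Q : Type u} [Group Q] (H : Subgroup Q) (R : Type u) [Group R]

def ofQ : Q →* CosetSemidirect H R := SemidirectProduct.inr.comp (MonoidHom.inl Q R)

def loop (r : R) : FreeGroup ((Q ⧸ H) × R) :=
  FreeGroup.of (((1 : Q) : Q ⧸ H), 1) * (FreeGroup.of (((1 : Q) : Q ⧸ H), r))⁻¹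

def ofR : R →* CosetSemidirect H R where
  toFun r := ⟨loop H R r, (1, r)⟩
  map_one' := by ext <;> simp [loop]
  map_mul' r r' := by
    refine SemidirectProduct.ext ?_ ?_
    · simp [loop, mul_assoc]
    · simp

variable {H} in
theorem ofQ_commute_ofR {h : Q} (hh : h ∈ H) (r : R) : Commute (ofQ H R h) (ofR H R r) := by
  have : (h : Q ⧸ H) = ((1 : Q) : Q ⧸ H) := QuotientGroup.eq.mpr (by simpa using hh)
  refine SemidirectProduct.ext ?_ ?_
  · simp [ofQ, ofR, loop, this]
  · simp [ofQ, ofR]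

variable {R}

def cosetWord : Q → R → List (Q × R) → List (((Q ⧸ H) × R) × Bool)
  | _, _, [] => []
  | P, S, (q, r) :: L =>
    ((((P * q : Q) : Q ⧸ H), S), true) :: ((((P * q : Q) : Q ⧸ H), S * r), false) ::
      cosetWord (P * q) (S * r) L

@[simp] theorem ofQ_left (q : Q) : (ofQ H R q).left = 1 := rfl
@[simp] theorem ofQ_right (q : Q) : (ofQ H R q).right = (q, 1) := rfl
@[simp] theorem ofR_left (r : R) : (ofR H R r).left = loop H R r := rfl
@[simp] theorem ofR_right (r : R) : (ofR H R r).right = (1, r) := rfl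

theorem act_left_prod (P : Q) (S : R) (L : List (Q × R)) :
    act H R (P, S) ((L.map fun p => ofQ H R p.1 * ofR H R p.2).prod).left =
      FreeGroup.mk (cosetWord H P S L) := by
  induction L generalizing P S with
  | nil => simp [cosetWord, ← FreeGroup.one_eq_mk]
  | cons p L ih =>
    obtain ⟨q, r⟩ := p
    rw [List.map_cons, List.prod_cons, SemidirectProduct.mul_left, SemidirectProduct.mul_left,
      SemidirectProduct.mul_right, map_mul, ← MulAut.mul_apply, ← map_mul, cosetWord,
      ← FreeGroup.of_mul_inv_of_mul_mk, ← ih]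
    simp only [ofQ_left, ofQ_right, ofR_left, ofR_right, one_mul, ← MulAut.mul_apply,
      ← map_mul, Prod.mk_mul_mk, mul_one]
    simp [loop, MulAction.Quotient.smul_mk]

variable {H} in
theorem isReduced_cosetWord (P : Q) (S : R) {L : List (Q × R)} (hr : ∀ p ∈ L, p.2 ≠ 1)
    (hq : ∀ p ∈ L.tail, p.1 ∉ H) : FreeGroup.IsReduced (cosetWord H P S L) := by
  induction L generalizing P S with
  | nil => exact .nil
  | cons p L ih =>
    obtain ⟨q, r⟩ := p
    have ih := ih (P * q) (S * r) (fun p hp => hr p (List.mem_cons_of_mem _ hp))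
      (fun p hp => hq p (List.mem_of_mem_tail hp))
    rw [cosetWord, FreeGroup.isReduced_cons_cons]
    refine ⟨fun h => (hr (q, r) List.mem_cons_self (by simpa using h)).elim, ?_⟩
    cases L with
    | nil => exact .singleton
    | cons p L =>
      rw [cosetWord] at ih ⊢
      rw [FreeGroup.isReduced_cons_cons]
      refine ⟨fun h => (hq p List.mem_cons_self ?_).elim, ih⟩
      simpa [QuotientGroup.eq, mul_assoc] using congrArg Prod.fst h

variable {H} in
theorem prod_mul_ofQ_ne_one {L : List (Q × R)} (hL : L ≠ []) (hr : ∀ p ∈ L, p.2 ≠ 1)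
    (hq : ∀ p ∈ L.tail, p.1 ∉ H) (q : Q) :
    (L.map fun p => ofQ H R p.1 * ofR H R p.2).prod * ofQ H R q ≠ 1 := by
  classical
  set X := (L.map fun p => ofQ H R p.1 * ofR H R p.2).prod
  intro h
  have hleft : (X * ofQ H R q).left = X.left := by simp [SemidirectProduct.mul_left]
  have hw := act_left_prod H 1 1 L
  rw [← hleft, h, SemidirectProduct.one_left, map_one] at hw
  have hw := congrArg FreeGroup.toWord hw
  rw [FreeGroup.toWord_mk, (isReduced_cosetWord 1 1 hr hq).reduce_eq, FreeGroup.toWord_one] at hw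
  obtain ⟨⟨q, r⟩, L, rfl⟩ := List.exists_cons_of_ne_nil hL
  simp [cosetWord] at hw

end CosetSemidirect

namespace SpecialAmalgam

variable {A C₀ Q R : Type u} [Group A] [Group C₀] [Group Q] [Group R] {B : Subgroup A}

def toCosetSemidirect (φ : A →* Q) (ψ : C₀ →* R) :
    SpecialAmalgam A B C₀ →* CosetSemidirect (B.map φ) R :=
  lift ((CosetSemidirect.ofQ _ R).comp φ) ((CosetSemidirect.ofR _ R).comp ψ) fun _ hb _ =>
    CosetSemidirect.ofQ_commute_ofR R (Subgroup.mem_map_of_mem φ hb) _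

theorem toCosetSemidirect_alternatingProd_ne_one (φ : A →* Q) (ψ : C₀ →* R)
    {L : List (A × C₀)} (hL : L ≠ []) (hψ : ∀ p ∈ L, ψ p.2 ≠ 1)
    (hφ : ∀ p ∈ L.tail, φ p.1 ∉ φ '' B) (a : A) :
    toCosetSemidirect φ ψ (alternatingProd B L a) ≠ 1 := by
  convert CosetSemidirect.prod_mul_ofQ_ne_one (H := B.map φ) (L := L.map fun p => (φ p.1, ψ p.2))
    (by simpa using hL) ?_ ?_ (φ a) using 1
  · simp [toCosetSemidirect, alternatingProd, map_list_prod, Function.comp_def]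
  · intro _ hp
    obtain ⟨p, hpL, rfl⟩ := List.mem_map.mp hp
    exact hψ p hpL
  · intro _ hp
    rw [← List.map_tail] at hp
    obtain ⟨p, hpL, rfl⟩ := List.mem_map.mp hp
    exact hφ p hpL

end SpecialAmalgam

/-- If `C` is closed under isomorphism, subgroups and finite direct products,
free-by-`C` groups are residually `C`, the groups `A` and `C₀` are residually
`C`, and `B ≤ A` is `C`-closed in `A`, then the special amalgam `A ⋆_B C₀`
is residually `C`. -/
theorem specialAmalgam_residuallyC (C : ∀ (G : Type u) [Group G], Prop)
    (hIso : ∀ (G H : Type u) [Group G] [Group H], G ≃* H → C G → C H)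
    (hSub : ∀ (G : Type u) [Group G] (H : Subgroup G), C G → C H)
    (hProd : ∀ (G H : Type u) [Group G] [Group H], C G → C H → C (G × H))
    (hFree : ∀ (G : Type u) [Group G],
      (∃ (N : Subgroup G) (_ : N.Normal), IsFreeGroup N ∧ C (G ⧸ N)) →
      ResiduallyC C G)
    (A C₀ : Type u) [Group A] [Group C₀] (B : Subgroup A)
    (hA : ResiduallyC C A) (hC : ResiduallyC C C₀)
    (hB : CClosed C (B : Set A)) :
    ResiduallyC C (SpecialAmalgam A B C₀) := by
  intro g hg
  obtain ⟨L, a, hL, rfl⟩ := SpecialAmalgam.exists_eq_alternatingProd g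
  rcases eq_or_ne L [] with rfl | hne
  · rw [SpecialAmalgam.alternatingProd_nil] at hg ⊢
    refine hA.exists_of_map SpecialAmalgam.projA_surjective ?_
    rw [SpecialAmalgam.projA_ofA]
    rintro rfl
    exact hg (map_one _)
  obtain ⟨X, _, -, hX, -, -⟩ := hC _ (hL.1 _ (List.head_mem hne))
  obtain ⟨Q, _, φ, hQ, -, hφ⟩ :=
    hB.exists_forall_list hSub hProd hX (L.tail.map Prod.fst) (List.forall_mem_map.mpr hL.2)
  obtain ⟨R, _, ψ, hR, -, hψ⟩ :=
    hC.cClosed_one.exists_forall_list hSub hProd hX (L.map Prod.snd) (List.forall_mem_map.mpr hL.1)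
  refine (SemidirectProduct.residuallyC_subgroup hIso hSub hFree (hProd _ _ hQ hR) _).exists_of_map
    (SpecialAmalgam.toCosetSemidirect φ ψ).rangeRestrict_surjective ?_
  rw [Ne, ← Subtype.coe_inj]
  exact SpecialAmalgam.toCosetSemidirect_alternatingProd_ne_one φ ψ hne
    (fun p hp => by simpa using hψ p.2 (List.mem_map_of_mem hp))
    (fun p hp => hφ p.1 (List.mem_map_of_mem hp)) a
end

section
/- Let C be a class of groups closed under taking subgroups and under taking finite direct products, and let G be a residually C group. If R ≤ G is a retract of G, i.e., there is a homomorphism ρ : G → G with ρ ∘ ρ = ρ and image equal to R, then R is C-closed in G. -/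
/-
If `ρ` is a retraction of `G` onto `R` and `g ∉ R`, then `g ≠ ρ g`, so residuality gives
`φ : G → Q` with `Q ∈ C` and `φ g ≠ φ (ρ g)`. The map `x ↦ (φ x, φ (ρ x))` into `Q × Q` separates `g`
from `R`: on `R` its two coordinates agree, at `g` they do not. Its image is a subgroup of
`Q × Q ∈ C`, hence in `C`.
-/

universe u

open Monoid

theorem MonoidHom.apply_eq_self_of_comp_self {M : Type*} [MulOneClass M] {ρ : M →* M}
    (hρ : ρ.comp ρ = ρ) {x : M} (hx : x ∈ Set.range ρ) : ρ x = x := by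
  obtain ⟨y, rfl⟩ := hx
  exact DFunLike.congr_fun hρ y

theorem MonoidHom.prod_comp_apply_notMem_image_range {M N : Type*} [MulOneClass M] [MulOneClass N]
    (φ : M →* N) {ρ : M →* M} (hρ : ρ.comp ρ = ρ) {g : M} (hg : φ (ρ g) ≠ φ g) :
    φ.prod (φ.comp ρ) g ∉ φ.prod (φ.comp ρ) '' Set.range ρ := by
  rintro ⟨x, hx, hxg⟩
  have hfst : φ x = φ g := congrArg Prod.fst hxg
  have hsnd : φ (ρ x) = φ (ρ g) := congrArg Prod.snd hxg
  rw [MonoidHom.apply_eq_self_of_comp_self hρ hx, hfst] at hsnd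
  exact hg hsnd.symm

theorem ResiduallyC.exists_apply_ne {C : ∀ (G : Type u) [Group G], Prop} {G : Type u} [Group G]
    (hG : ResiduallyC C G) {g h : G} (hgh : g ≠ h) :
    ∃ (Q : Type u) (_ : Group Q) (φ : G →* Q), C Q ∧ φ g ≠ φ h := by
  obtain ⟨Q, _, φ, hCQ, -, hφ⟩ := hG (g * h⁻¹) (mul_inv_eq_one.not.mpr hgh)
  refine ⟨Q, inferInstance, φ, hCQ, fun hφgh => hφ ?_⟩
  rw [map_mul, map_inv, hφgh, mul_inv_cancel]

theorem cClosed_of_separating {C : ∀ (G : Type u) [Group G], Prop}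
    (hSub : ∀ (G : Type u) [Group G] (H : Subgroup G), C G → C H)
    {G : Type u} [Group G] {X : Set G}
    (hsep : ∀ g ∉ X, ∃ (Q : Type u) (_ : Group Q) (φ : G →* Q), C Q ∧ φ g ∉ φ '' X) :
    CClosed C X := by
  intro g hg
  obtain ⟨Q, _, φ, hCQ, hφ⟩ := hsep g hg
  refine ⟨φ.range, inferInstance, φ.rangeRestrict, hSub Q φ.range hCQ,
    φ.rangeRestrict_surjective, ?_⟩
  rintro ⟨x, hx, hxg⟩
  exact hφ ⟨x, hx, congrArg Subtype.val hxg⟩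

theorem retract_CClosed_general (C : ∀ (G : Type u) [Group G], Prop)
    (hSub : ∀ (G : Type u) [Group G] (H : Subgroup G), C G → C H)
    (hProd : ∀ (G H : Type u) [Group G] [Group H], C G → C H → C (G × H))
    (G : Type u) [Group G] (hG : ResiduallyC C G)
    (R : Subgroup G) (ρ : G →* G) (hρ : ρ.comp ρ = ρ)
    (hrange : Set.range ρ = (R : Set G)) :
    CClosed C (R : Set G) := by
  rw [← hrange]
  refine cClosed_of_separating hSub fun g hg => ?_
  obtain ⟨Q, _, φ, hCQ, hφ⟩ :=
    hG.exists_apply_ne fun hfix : ρ g = g => hg ⟨g, hfix⟩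
  exact ⟨Q × Q, inferInstance, φ.prod (φ.comp ρ), hProd Q Q hCQ hCQ,
    φ.prod_comp_apply_notMem_image_range hρ hφ⟩

/-- If `C` is closed under isomorphism, subgroups and finite direct products
and `G` is residually `C`, then every retract `R` of `G` is `C`-closed
in `G`. -/
theorem retract_CClosed (C : ∀ (G : Type u) [Group G], Prop)
    (hIso : ∀ (G H : Type u) [Group G] [Group H], G ≃* H → C G → C H)
    (hSub : ∀ (G : Type u) [Group G] (H : Subgroup G), C G → C H)
    (hProd : ∀ (G H : Type u) [Group G] [Group H], C G → C H → C (G × H))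
    (G : Type u) [Group G] (hG : ResiduallyC C G)
    (R : Subgroup G) (ρ : G →* G) (hρ : ρ.comp ρ = ρ)
    (hrange : Set.range ρ = (R : Set G)) :
    CClosed C (R : Set G) :=
  retract_CClosed_general C hSub hProd G hG R ρ hρ hrange
end

section
/- Let B ≤ A and C₀ be groups and let G = A ⋆_B C₀ be their special amalgam. Suppose g = a₀ c₁ a₁ ⋯ cₙ aₙ is in reduced form, meaning aᵢ ∈ A for i = 0,…,n, cⱼ ∈ C₀ with cⱼ ≠ 1 for j = 1,…,n, and aᵢ ∉ B for i = 1,…,n−1. If n ≥ 1, then g is not the trivial element of G. -/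
/-!
Map `A ⋆_B C₀` to Mathlib's amalgamated product `PushoutI` of `A` and `B × C₀` over `B`. There
`a₀⁻¹ g aₙ⁻¹` is the product of the word `c₁ a₁ ⋯ aₙ₋₁ cₙ`, which alternates between the two
factors and has no letter in `B`. By the normal form theorem the product of such a nonempty word
is never in `B`, and it is not in `A` either: if it were `x ∈ A \ B`, appending the letter `x⁻¹`
would give another such word with product `1`. So `g ≠ 1`, since `a₀⁻¹ aₙ⁻¹ ∈ A`.
-/

universe u

open Monoid

/-- The element `a₀ c₁ a₁ ⋯ cₙ aₙ` of the special amalgam `A ⋆_B C₀`. -/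
def SpecialAmalgam.word (A : Type u) [Group A] (B : Subgroup A) (C₀ : Type u) [Group C₀]
    (n : ℕ) (a : Fin (n + 1) → A) (c : Fin n → C₀) : SpecialAmalgam A B C₀ :=
  SpecialAmalgam.ofA A B C₀ (a 0) *
    (List.ofFn fun j : Fin n =>
      SpecialAmalgam.ofC A B C₀ (c j) * SpecialAmalgam.ofA A B C₀ (a j.succ)).prod

namespace Monoid.PushoutI

open CoprodI

variable {ι : Type*} {G : ι → Type*} {H : Type*} [∀ i, Group (G i)] [Group H]
  {φ : ∀ i, H →* G i}

theorem reduced_neWord_singleton_iff {i : ι} (x : G i) (hx : x ≠ 1) :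
    Reduced φ (NeWord.singleton x hx).toWord ↔ x ∉ (φ i).range := by
  simp [Reduced, NeWord.toWord]

theorem reduced_neWord_append_iff {i j k l : ι} (w₁ : NeWord G i j) (hjk : j ≠ k)
    (w₂ : NeWord G k l) :
    Reduced φ (w₁.append hjk w₂).toWord ↔ Reduced φ w₁.toWord ∧ Reduced φ w₂.toWord := by
  simp only [Reduced, NeWord.toWord, NeWord.toList, List.mem_append, or_imp, forall_and]

theorem Reduced.ofCoprodI_prod_notMem_range_of (hφ : ∀ i, Function.Injective (φ i))
    {i j k : ι} {w : NeWord G j k} (hw : Reduced φ w.toWord) (hki : k ≠ i) :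
    ofCoprodI w.prod ∉ (of (φ := φ) i).range := by
  rintro ⟨x, hx⟩
  by_cases hxφ : x ∈ (φ i).range
  · obtain ⟨h, rfl⟩ := hxφ
    have hmem : ofCoprodI w.toWord.prod ∈ (base φ).range :=
      ⟨h, by rw [← of_apply_eq_base φ i h]; exact hx⟩
    exact w.toList_ne_nil (congrArg Word.toList (hw.eq_empty_of_mem_range hφ hmem))
  · have hx1 : x⁻¹ ≠ 1 := fun h ↦ hxφ (inv_eq_one.1 h ▸ one_mem _)
    let w' := w.append hki (NeWord.singleton x⁻¹ hx1)
    have hw' : Reduced φ w'.toWord :=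
      (reduced_neWord_append_iff _ _ _).2
        ⟨hw, (reduced_neWord_singleton_iff _ _).2 fun h ↦ hxφ (by simpa using inv_mem h)⟩
    have hmem : ofCoprodI w'.toWord.prod ∈ (base φ).range := by
      have hprod : ofCoprodI (φ := φ) w'.prod = 1 := by
        simp [w', NeWord.append_prod, hx]
      exact hprod ▸ one_mem _
    exact w'.toList_ne_nil (congrArg Word.toList (hw'.eq_empty_of_mem_range hφ hmem))

end Monoid.PushoutI

namespace SpecialAmalgam

open CoprodI PushoutI

variable (A : Type u) [Group A] (B : Subgroup A) (C₀ : Type u) [Group C₀]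

abbrev Factor : Bool → Type u
  | true => A
  | false => B × C₀

instance : ∀ b, Group (Factor A B C₀ b)
  | true => inferInstanceAs (Group A)
  | false => inferInstanceAs (Group (B × C₀))

def incl : ∀ b, B →* Factor A B C₀ b
  | true => B.subtype
  | false => MonoidHom.inl B C₀

theorem incl_injective : ∀ b, Function.Injective (incl A B C₀ b)
  | true => B.subtype_injective
  | false => Prod.mk_left_injective 1

def toPushoutI : SpecialAmalgam A B C₀ →* PushoutI (incl A B C₀) :=
  QuotientGroup.lift _
    (Coprod.lift (of (φ := incl A B C₀) true) (of (φ := incl A B C₀) false)) <| by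
    refine Subgroup.normalClosure_le_normal ?_
    rintro _ ⟨b, rfl⟩
    rw [SetLike.mem_coe, MonoidHom.mem_ker, map_mul, map_inv, Coprod.lift_apply_inl,
      Coprod.lift_apply_inr, mul_inv_eq_one]
    exact (of_apply_eq_base _ true b).trans (of_apply_eq_base _ false b).symm

variable {A B C₀}

@[simp]
theorem toPushoutI_ofA (x : A) :
    toPushoutI A B C₀ (ofA A B C₀ x) = of (φ := incl A B C₀) true x := rfl

@[simp]
theorem toPushoutI_ofC (c : C₀) :
    toPushoutI A B C₀ (ofC A B C₀ c) = of (φ := incl A B C₀) false (1, c) := rfl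

theorem word_succ (n : ℕ) (a : Fin (n + 2) → A) (c : Fin (n + 1) → C₀) :
    word A B C₀ (n + 1) a c =
      ofA A B C₀ (a 0) * ofC A B C₀ (c 0) *
        word A B C₀ n (fun i ↦ a i.succ) (fun j ↦ c j.succ) := by
  simp [word, List.ofFn_succ, mul_assoc]

theorem word_zero (a : Fin 1 → A) (c : Fin 0 → C₀) : word A B C₀ 0 a c = ofA A B C₀ (a 0) := by
  simp [word]

theorem mk_one_notMem_range_incl_false {c : C₀} (hc : c ≠ 1) :
    ((1 : B), c) ∉ (incl A B C₀ false).range := by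
  rintro ⟨b, hb⟩
  exact hc (congrArg Prod.snd hb).symm

theorem notMem_range_incl_true {x : A} (hx : x ∉ B) : x ∉ (incl A B C₀ true).range := by
  rintro ⟨b, rfl⟩
  exact hx b.2

theorem exists_reduced_neWord_toPushoutI_word (n : ℕ) (a : Fin (n + 2) → A)
    (c : Fin (n + 1) → C₀)
    (hc : ∀ j, c j ≠ 1) (ha : ∀ i : Fin (n + 2), 0 < (i : ℕ) → (i : ℕ) < n + 1 → a i ∉ B) :
    ∃ w : NeWord (Factor A B C₀) false false, Reduced (incl A B C₀) w.toWord ∧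
      toPushoutI A B C₀ (word A B C₀ (n + 1) a c) =
        of true (a 0) * ofCoprodI w.prod * of true (a (Fin.last (n + 1))) := by
  have hc' : ∀ j, ((1 : B), c j) ≠ 1 := fun j h ↦ hc j (congrArg Prod.snd h)
  induction n with
  | zero =>
    refine ⟨.singleton _ (hc' 0), (reduced_neWord_singleton_iff _ _).2
      (mk_one_notMem_range_incl_false (hc 0)), ?_⟩
    simp [word_succ, word_zero]
  | succ n ih =>
    obtain ⟨w, hw, hword⟩ := ih (fun i ↦ a i.succ) (fun j ↦ c j.succ) (fun j ↦ hc j.succ)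
      (fun i _ hi ↦ ha i.succ (Nat.succ_pos _) (by simpa using hi)) (fun j ↦ hc' j.succ)
    have ha1 : a 1 ∉ B := ha 1 (by simp) (by simp)
    have ha1' : a 1 ≠ 1 := fun h ↦ ha1 (h ▸ one_mem B)
    refine ⟨(NeWord.singleton _ (hc' 0)).append (by decide)
      ((NeWord.singleton (i := true) (a 1) ha1').append (by decide) w), ?_, ?_⟩
    · simp only [reduced_neWord_append_iff, reduced_neWord_singleton_iff]
      exact ⟨mk_one_notMem_range_incl_false (hc 0), notMem_range_incl_true ha1, hw⟩
    · rw [word_succ, map_mul, map_mul, hword]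
      simp [NeWord.append_prod, mul_assoc, Fin.succ_last]

end SpecialAmalgam

/-- A word `a₀ c₁ a₁ ⋯ cₙ aₙ` in reduced form (all `cⱼ ≠ 1`, the intermediate
`aᵢ` outside `B`) with `n ≥ 1` represents a nontrivial element of the special
amalgam `A ⋆_B C₀`. -/
theorem specialAmalgam_reduced_word_ne_one
    (A C₀ : Type u) [Group A] [Group C₀] (B : Subgroup A)
    (n : ℕ) (hn : 1 ≤ n) (a : Fin (n + 1) → A) (c : Fin n → C₀)
    (hc : ∀ j : Fin n, c j ≠ 1)
    (ha : ∀ i : Fin (n + 1), 0 < (i : ℕ) → (i : ℕ) < n → a i ∉ B) :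
    SpecialAmalgam.word A B C₀ n a c ≠ 1 := by
  obtain ⟨k, rfl⟩ : ∃ k, n = k + 1 := ⟨n - 1, by omega⟩
  obtain ⟨w, hw, hword⟩ := SpecialAmalgam.exists_reduced_neWord_toPushoutI_word k a c hc ha
  intro h
  refine hw.ofCoprodI_prod_notMem_range_of (SpecialAmalgam.incl_injective A B C₀)
    Bool.false_ne_true ⟨(a 0)⁻¹ * (a (Fin.last (k + 1)))⁻¹, ?_⟩
  rw [h, map_one] at hword
  rw [map_mul, map_inv, map_inv]
  exact (eq_inv_mul_of_mul_eq (eq_inv_of_mul_eq_one_left hword.symm)).symm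
end

section
/- Let Γ = (V,E) be a simplicial graph and let 𝒢 = {G_v | v ∈ V} be a family of residually finite groups. Then the graph product Γ𝒢 is residually finite. -/
universe u

open Monoid
open scoped commutatorElement

/-- The graph product of the family `G` over the simplicial graph `Γ`:
the quotient of the free product `∗_v G v` by the normal closure of the
commutators `[g_u, g_v]` for adjacent vertices `u, v`. -/
def GraphProduct {V : Type u} (Γ : SimpleGraph V) (G : V → Type u)
    [∀ v, Group (G v)] : Type u :=
  CoprodI G ⧸ Subgroup.normalClosure
    { x : CoprodI G | ∃ (u v : V) (gu : G u) (gv : G v),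
        Γ.Adj u v ∧ x = ⁅CoprodI.of gu, CoprodI.of gv⁆ }

instance {V : Type u} (Γ : SimpleGraph V) (G : V → Type u) [∀ v, Group (G v)] :
    Group (GraphProduct Γ G) :=
  QuotientGroup.Quotient.group _

/-- A group is residually finite if every nontrivial element survives in a
finite surjective homomorphic image. -/
def ResiduallyFinite (G : Type u) [Group G] : Prop :=
  ∀ g : G, g ≠ 1 → ∃ (Q : Type u) (_ : Group Q) (φ : G →* Q),
    Finite Q ∧ Function.Surjective φ ∧ φ g ≠ 1

/-!
Every element of the graph product is the image of a reduced word `w`: its letters are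
nontrivial, and no letter can be merged with a later letter of the same vertex group using
the commutation relations. Mapping each `G v` onto a finite quotient in which the letters of
`w` survive keeps `w` reduced and leaves only finitely many nontrivial letters, so it suffices
to detect reduced words in graph products with finitely many nontrivial letters.

For those, let the graph product act on the `𝔽₂`-space spanned by words, modulo swapping
adjacent commuting letters, words containing a trivial letter, and words longer than
`n = |w|`; the last relation keeps the quotient finite. A letter `g ∈ G v` acts by
`1 + act v g`, where `act v g` multiplies `g` into the first `v`-letter that can be shuffled to
the front, and prepends `g` if there is none. A reduced word `w` sends the empty word to `w`
plus shorter words, and counting nontrivial words of length `n` tells this apart from the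
empty word.
-/

theorem residuallyFinite_of_forall_exists_finite {H : Type u} [Group H]
    (h : ∀ g : H, g ≠ 1 → ∃ (Q : Type u) (_ : Group Q) (_ : Finite Q) (φ : H →* Q), φ g ≠ 1) :
    ResiduallyFinite H := by
  intro g hg
  obtain ⟨Q, _, _, φ, hφ⟩ := h g hg
  exact ⟨φ.range, inferInstance, φ.rangeRestrict, inferInstance, φ.rangeRestrict_surjective,
    fun h1 => hφ (by simpa using congrArg Subtype.val h1)⟩

theorem finite_units_end {R N : Type*} [Semiring R] [AddCommMonoid N] [Module R N] [Finite N] :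
    Finite (Module.End R N)ˣ := by
  have : Finite (Module.End R N) := Finite.of_injective _ DFunLike.coe_injective
  infer_instance

namespace GraphProduct

section ReducedWords

variable {V : Type u} (Γ : SimpleGraph V) {G H : V → Type u}

/-- Some `v`-letter of the word can be moved to its front by commuting it past the letters
before it. -/
def HasInitial (v : V) : List (Σ v, G v) → Prop
  | [] => False
  | x :: w => x.1 = v ∨ Γ.Adj v x.1 ∧ HasInitial v w

variable {Γ}

theorem hasInitial_congr {v : V} : ∀ {w w' : List (Σ v, G v)},
    w.map Sigma.fst = w'.map Sigma.fst → (HasInitial Γ v w ↔ HasInitial Γ v w')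
  | [], [], _ => Iff.rfl
  | x :: w, x' :: w', h => by
    simp only [List.map_cons, List.cons.injEq] at h
    rw [HasInitial, HasInitial, h.1, hasInitial_congr h.2]

theorem hasInitial_append_swap {v : V} {x y : Σ v, G v} (hxy : Γ.Adj x.1 y.1)
    (b : List (Σ v, G v)) :
    ∀ a, HasInitial Γ v (a ++ x :: y :: b) ↔ HasInitial Γ v (a ++ y :: x :: b)
  | [] => by
    simp only [List.nil_append, HasInitial]
    constructor
    · rintro (rfl | ⟨hx, rfl | ⟨hy, h⟩⟩)
      · exact .inr ⟨hxy, .inl rfl⟩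
      · exact .inl rfl
      · exact .inr ⟨hy, .inr ⟨hx, h⟩⟩
    · rintro (rfl | ⟨hy, rfl | ⟨hx, h⟩⟩)
      · exact .inr ⟨hxy.symm, .inl rfl⟩
      · exact .inl rfl
      · exact .inr ⟨hx, .inr ⟨hy, h⟩⟩
  | z :: a => by
    simp only [List.cons_append, HasInitial, hasInitial_append_swap hxy b a]

variable [∀ v, Group (G v)] [∀ v, Group (H v)]

variable (Γ) in
def IsReduced : List (Σ v, G v) → Prop
  | [] => True
  | x :: w => x.2 ≠ 1 ∧ ¬ HasInitial Γ x.1 w ∧ IsReduced w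

theorem IsReduced.ne_one : ∀ {w : List (Σ v, G v)}, IsReduced Γ w → ∀ x ∈ w, x.2 ≠ 1
  | y :: w, hw, x, hx => by
    rcases List.mem_cons.1 hx with rfl | hx
    exacts [hw.1, ne_one hw.2.2 x hx]

theorem hasInitial_map (φ : ∀ v, G v →* H v) {v : V} :
    ∀ w : List (Σ v, G v), HasInitial Γ v (w.map (Sigma.map id fun v => φ v)) ↔ HasInitial Γ v w
  | [] => Iff.rfl
  | x :: w => by simp only [List.map_cons, HasInitial, Sigma.map, id, hasInitial_map φ w]

theorem IsReduced.map (φ : ∀ v, G v →* H v) :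
    ∀ {w : List (Σ v, G v)}, IsReduced Γ w → (∀ x ∈ w, φ x.1 x.2 ≠ 1) →
      IsReduced Γ (w.map (Sigma.map id fun v => φ v))
  | [], _, _ => trivial
  | x :: w, ⟨_, hx, hw⟩, hφ =>
    ⟨hφ x List.mem_cons_self, (hasInitial_map φ w).not.2 hx,
      hw.map φ fun y hy => hφ y (List.mem_cons_of_mem x hy)⟩

variable (Γ) in
noncomputable def mk : CoprodI G →* GraphProduct Γ G := QuotientGroup.mk' _

theorem mk_surjective : Function.Surjective (mk Γ (G := G)) := QuotientGroup.mk'_surjective _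

theorem commute_mk_of {u v : V} (huv : Γ.Adj u v) (g : G u) (h : G v) :
    Commute (mk Γ (CoprodI.of g)) (mk Γ (CoprodI.of h)) := by
  rw [← commutatorElement_eq_one_iff_commute, ← map_commutatorElement]
  exact (QuotientGroup.eq_one_iff _).2 (Subgroup.subset_normalClosure ⟨u, v, g, h, huv, rfl⟩)

noncomputable def lift {K : Type*} [Group K] (f : ∀ v, G v →* K)
    (hf : ∀ u v, Γ.Adj u v → ∀ (g : G u) (h : G v), Commute (f u g) (f v h)) :
    GraphProduct Γ G →* K :=
  QuotientGroup.lift _ (CoprodI.lift f) <| Subgroup.normalClosure_le_normal <| by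
    rintro _ ⟨u, v, g, h, huv, rfl⟩
    rw [SetLike.mem_coe, MonoidHom.mem_ker, map_commutatorElement, CoprodI.lift_of,
      CoprodI.lift_of, commutatorElement_eq_one_iff_commute]
    exact hf u v huv g h

theorem lift_mk {K : Type*} [Group K] (f : ∀ v, G v →* K)
    (hf : ∀ u v, Γ.Adj u v → ∀ (g : G u) (h : G v), Commute (f u g) (f v h)) (x : CoprodI G) :
    lift f hf (mk Γ x) = CoprodI.lift f x :=
  QuotientGroup.lift_mk' _ _ _

noncomputable def wordProd (w : List (Σ v, G v)) : CoprodI G := (w.map fun x => CoprodI.of x.2).prod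

@[simp] theorem wordProd_nil : wordProd ([] : List (Σ v, G v)) = 1 := rfl

@[simp] theorem wordProd_cons (x : Σ v, G v) (w : List (Σ v, G v)) :
    wordProd (x :: w) = CoprodI.of x.2 * wordProd w := List.prod_cons

theorem exists_wordProd_eq (y : CoprodI G) : ∃ w, wordProd w = y := by
  induction y using CoprodI.induction_on with
  | one => exact ⟨[], rfl⟩
  | of v g => exact ⟨[⟨v, g⟩], by simp⟩
  | mul y z hy hz =>
    obtain ⟨⟨a, rfl⟩, ⟨b, rfl⟩⟩ := And.intro hy hz
    exact ⟨a ++ b, by simp [wordProd]⟩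

variable (Γ) in
noncomputable def map (φ : ∀ v, G v →* H v) : GraphProduct Γ G →* GraphProduct Γ H :=
  lift (fun v => (mk Γ).comp (CoprodI.of.comp (φ v))) fun _ _ huv _ _ => commute_mk_of huv _ _

theorem map_mk_wordProd (φ : ∀ v, G v →* H v) (w : List (Σ v, G v)) :
    map Γ φ (mk Γ (wordProd w)) = mk Γ (wordProd (w.map (Sigma.map id fun v => φ v))) := by
  rw [map, lift_mk]
  induction w with
  | nil => simp
  | cons x w ih => simp [ih, Sigma.map]

theorem exists_mk_wordProd_cons_eq {v : V} (g : G v) : ∀ {w : List (Σ v, G v)},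
    HasInitial Γ v w → ∃ w', w'.length = w.length ∧
      mk Γ (wordProd w') = mk Γ (wordProd (⟨v, g⟩ :: w))
  | ⟨u, a⟩ :: w, hw => by
    rcases hw with rfl | ⟨hvu, hw⟩
    · exact ⟨⟨u, g * a⟩ :: w, rfl, by simp [mul_assoc]⟩
    obtain ⟨w', hlen, hw'⟩ := exists_mk_wordProd_cons_eq g hw
    refine ⟨⟨u, a⟩ :: w', by simp [hlen], ?_⟩
    simp only [wordProd_cons, map_mul] at hw' ⊢
    rw [hw', ← mul_assoc, ← mul_assoc, (commute_mk_of hvu g a).eq]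

theorem exists_isReduced_eq : ∀ w : List (Σ v, G v),
    ∃ w', IsReduced Γ w' ∧ w'.length ≤ w.length ∧ mk Γ (wordProd w') = mk Γ (wordProd w)
  | [] => ⟨[], trivial, le_rfl, rfl⟩
  | x :: w => by
    obtain ⟨w₁, hred₁, hlen₁, heq₁⟩ := exists_isReduced_eq w
    by_cases hx : x.2 = 1
    · exact ⟨w₁, hred₁, by simp; omega, by simp [heq₁, hx]⟩
    by_cases hinit : HasInitial Γ x.1 w₁
    · obtain ⟨w₂, hlen₂, heq₂⟩ := exists_mk_wordProd_cons_eq x.2 hinit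
      obtain ⟨w₃, hred₃, hlen₃, heq₃⟩ := exists_isReduced_eq w₂
      exact ⟨w₃, hred₃, by simp; omega, by rw [heq₃, heq₂]; simp [heq₁]⟩
    · exact ⟨x :: w₁, ⟨hx, hinit, hred₁⟩, by simp [hlen₁], by simp [heq₁]⟩
termination_by w => w.length
decreasing_by all_goals simp only [List.length_cons]; omega

theorem exists_isReduced (x : GraphProduct Γ G) : ∃ w, IsReduced Γ w ∧ mk Γ (wordProd w) = x := by
  obtain ⟨y, rfl⟩ := mk_surjective x
  obtain ⟨w, rfl⟩ := exists_wordProd_eq y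
  obtain ⟨w', hw', -, heq⟩ := exists_isReduced_eq w
  exact ⟨w', hw', heq⟩

end ReducedWords

section WordSpace

variable {V : Type u} {G : V → Type u}

variable (G) in
abbrev WordSpace := List (Σ v, G v) →₀ ZMod 2

noncomputable def ofWord (w : List (Σ v, G v)) : WordSpace G := Finsupp.single w 1

theorem WordSpace.ext {N : Type*} [AddCommGroup N] [Module (ZMod 2) N]
    {f f' : WordSpace G →ₗ[ZMod 2] N} (h : ∀ w, f (ofWord w) = f' (ofWord w)) : f = f' :=
  Finsupp.lhom_ext' fun w => LinearMap.ext_ring (h w)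

theorem WordSpace.map_mem_of_forall {N : Type*} [AddCommGroup N] [Module (ZMod 2) N]
    {p : Submodule (ZMod 2) N} (f : WordSpace G →ₗ[ZMod 2] N) (h : ∀ w, f (ofWord w) ∈ p)
    (m : WordSpace G) : f m ∈ p := by
  induction m using Finsupp.induction_linear with
  | zero => simp
  | add m m' hm hm' => simpa using p.add_mem hm hm'
  | single w c =>
    rw [← Finsupp.smul_single_one, map_smul]
    exact p.smul_mem c (h w)

noncomputable def spanWords (S : Set (List (Σ v, G v))) : Submodule (ZMod 2) (WordSpace G) :=
  Submodule.span (ZMod 2) (ofWord '' S)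

theorem ofWord_mem_spanWords {S : Set (List (Σ v, G v))} {w : List (Σ v, G v)} (hw : w ∈ S) :
    ofWord w ∈ spanWords S :=
  Submodule.subset_span ⟨w, hw, rfl⟩

theorem spanWords_le {S : Set (List (Σ v, G v))} {p : Submodule (ZMod 2) (WordSpace G)}
    (h : ∀ w ∈ S, ofWord w ∈ p) : spanWords S ≤ p :=
  Submodule.span_le.2 <| Set.image_subset_iff.2 h

noncomputable def lcons (x : Σ v, G v) : Module.End (ZMod 2) (WordSpace G) :=
  Finsupp.lmapDomain _ _ (List.cons x)

@[simp] theorem lcons_ofWord (x : Σ v, G v) (w : List (Σ v, G v)) :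
    lcons x (ofWord w) = ofWord (x :: w) := by
  simp [lcons, ofWord]

theorem lcons_mem_spanWords {S T : Set (List (Σ v, G v))} {x : Σ v, G v}
    (hST : ∀ w ∈ S, x :: w ∈ T) {m : WordSpace G} (hm : m ∈ spanWords S) :
    lcons x m ∈ spanWords T :=
  spanWords_le (p := (spanWords T).comap (lcons x))
    (fun w hw => by simpa using ofWord_mem_spanWords (hST w hw)) hm

end WordSpace

section Representation

variable {V : Type u} {Γ : SimpleGraph V} {G : V → Type u} [∀ v, Group (G v)]

open Classical in
/-- Multiplies `g` into the first `v`-letter `a`. The extra terms `ofWord (g :: ⋯)` and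
`ofWord (a :: ⋯)` are what make `g ↦ 1 + act v g` multiplicative over `𝔽₂` (`act_mul`). -/
noncomputable def merge (v : V) (g : G v) : List (Σ v, G v) → WordSpace G
  | [] => 0
  | ⟨u, a⟩ :: w =>
    if h : u = v then ofWord (⟨v, g * h ▸ a⟩ :: w) + ofWord (⟨v, g⟩ :: w) + ofWord (⟨u, a⟩ :: w)
    else lcons ⟨u, a⟩ (merge v g w)

@[simp] theorem merge_nil (v : V) (g : G v) : merge v g [] = 0 := rfl

@[simp] theorem merge_cons_self {v : V} (g a : G v) (w : List (Σ v, G v)) :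
    merge v g (⟨v, a⟩ :: w) =
      ofWord (⟨v, g * a⟩ :: w) + ofWord (⟨v, g⟩ :: w) + ofWord (⟨v, a⟩ :: w) := by
  simp [merge]

@[simp] theorem merge_cons_of_ne {u v : V} (g : G v) (a : G u) (hu : u ≠ v)
    (w : List (Σ v, G v)) : merge v g (⟨u, a⟩ :: w) = lcons ⟨u, a⟩ (merge v g w) := by
  simp [merge, hu]

theorem merge_mem_spanWords {v : V} (g : G v) : ∀ {w : List (Σ v, G v)} {S : Set _},
    (∀ s, s.map Sigma.fst = w.map Sigma.fst → s ∈ S) → merge v g w ∈ spanWords S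
  | [], _, _ => zero_mem _
  | ⟨u, a⟩ :: w, S, hS => by
    by_cases hu : u = v
    · subst hu
      rw [merge_cons_self]
      refine add_mem (add_mem ?_ ?_) ?_ <;> exact ofWord_mem_spanWords (hS _ (by simp))
    · rw [merge_cons_of_ne g a hu]
      exact lcons_mem_spanWords (S := {s | ⟨u, a⟩ :: s ∈ S}) (fun s hs => hs)
        (merge_mem_spanWords g fun s hs => hS _ (by simp [hs]))

noncomputable def lmerge (v : V) (g : G v) : Module.End (ZMod 2) (WordSpace G) :=
  Finsupp.linearCombination (ZMod 2) (merge v g)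

@[simp] theorem lmerge_ofWord (v : V) (g : G v) (w : List (Σ v, G v)) :
    lmerge v g (ofWord w) = merge v g w := by
  simp [lmerge, ofWord]

theorem lmerge_lcons_of_ne {u v : V} (g : G v) (a : G u) (hu : u ≠ v) (m : WordSpace G) :
    lmerge v g (lcons ⟨u, a⟩ m) = lcons ⟨u, a⟩ (lmerge v g m) := by
  have : lmerge v g ∘ₗ lcons ⟨u, a⟩ = lcons ⟨u, a⟩ ∘ₗ lmerge v g :=
    WordSpace.ext fun w => by simp [merge_cons_of_ne g a hu]
  exact LinearMap.congr_fun this m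

theorem lmerge_lcons_self {v : V} (g a : G v) (m : WordSpace G) :
    lmerge v g (lcons ⟨v, a⟩ m) = lcons ⟨v, g * a⟩ m + lcons ⟨v, g⟩ m + lcons ⟨v, a⟩ m := by
  have : lmerge v g ∘ₗ lcons ⟨v, a⟩ = lcons ⟨v, g * a⟩ + lcons ⟨v, g⟩ + lcons ⟨v, a⟩ :=
    WordSpace.ext fun w => by simp
  exact LinearMap.congr_fun this m

theorem lmerge_merge {v : V} (g h : G v) : ∀ w : List (Σ v, G v),
    lmerge v g (merge v h w) = merge v (g * h) w + merge v g w + merge v h w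
  | [] => by simp
  | ⟨u, a⟩ :: w => by
    by_cases hu : u = v
    · subst hu
      simp only [merge_cons_self, map_add, lmerge_ofWord, mul_assoc]
      linear_combination (norm := module) ZModModule.add_self (ofWord (⟨u, g⟩ :: w)) -
        ZModModule.add_self (ofWord (⟨u, a⟩ :: w))
    · simp only [merge_cons_of_ne _ a hu, lmerge_lcons_of_ne g a hu, lmerge_merge g h w, map_add]

theorem lmerge_merge_comm {u v : V} (g : G u) (h : G v) (huv : u ≠ v) :
    ∀ w : List (Σ v, G v), lmerge u g (merge v h w) = lmerge v h (merge u g w)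
  | [] => by simp
  | ⟨w₀, a⟩ :: w => by
    by_cases hu : w₀ = u
    · subst hu
      simp [merge_cons_of_ne h _ huv, lmerge_lcons_self]
    by_cases hv : w₀ = v
    · subst hv
      simp [merge_cons_of_ne g _ (Ne.symm huv), lmerge_lcons_self]
    · simp [merge_cons_of_ne g a hu, merge_cons_of_ne h a hv, lmerge_lcons_of_ne g a hu,
        lmerge_lcons_of_ne h a hv, lmerge_merge_comm g h huv w]

variable (Γ) in
open Classical in
noncomputable def act (v : V) (g : G v) : Module.End (ZMod 2) (WordSpace G) :=
  Finsupp.linearCombination (ZMod 2) fun w =>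
    if HasInitial Γ v w then merge v g w else ofWord (⟨v, g⟩ :: w)

theorem act_ofWord_of_hasInitial {v : V} (g : G v) {w : List (Σ v, G v)}
    (hw : HasInitial Γ v w) : act Γ v g (ofWord w) = merge v g w := by
  simp [act, ofWord, hw]

theorem act_ofWord_of_not_hasInitial {v : V} (g : G v) {w : List (Σ v, G v)}
    (hw : ¬ HasInitial Γ v w) : act Γ v g (ofWord w) = ofWord (⟨v, g⟩ :: w) := by
  simp [act, ofWord, hw]

theorem act_merge_of_hasInitial {u v : V} (g : G u) (h : G v) {w : List (Σ v, G v)}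
    (hw : HasInitial Γ u w) : act Γ u g (merge v h w) = lmerge u g (merge v h w) := by
  refine LinearMap.eqOn_span' ?_
    (merge_mem_spanWords h (S := {s | HasInitial Γ u s}) fun s hs => (hasInitial_congr hs).2 hw)
  rintro _ ⟨s, hs, rfl⟩
  simp [act_ofWord_of_hasInitial g hs]

theorem act_merge_of_not_hasInitial {u v : V} (g : G u) (h : G v) {w : List (Σ v, G v)}
    (hw : ¬ HasInitial Γ u w) : act Γ u g (merge v h w) = lcons ⟨u, g⟩ (merge v h w) := by
  refine LinearMap.eqOn_span' ?_ (merge_mem_spanWords h (S := {s | ¬ HasInitial Γ u s})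
    fun s hs => (hasInitial_congr hs).not.2 hw)
  rintro _ ⟨s, hs, rfl⟩
  simp [act_ofWord_of_not_hasInitial g hs]

theorem act_mul {v : V} (g h : G v) :
    act Γ v (g * h) = act Γ v g * act Γ v h + act Γ v g + act Γ v h := by
  refine WordSpace.ext fun w => ?_
  by_cases hw : HasInitial Γ v w
  · simp only [act_ofWord_of_hasInitial _ hw, LinearMap.add_apply, Module.End.mul_apply,
      act_merge_of_hasInitial g h hw, lmerge_merge]
    linear_combination (norm := module)
      -ZModModule.add_self (merge v g w) - ZModModule.add_self (merge v h w)
  · simp only [act_ofWord_of_not_hasInitial _ hw, LinearMap.add_apply, Module.End.mul_apply,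
      act_ofWord_of_hasInitial g (show HasInitial Γ v (⟨v, h⟩ :: w) from .inl rfl),
      merge_cons_self]
    linear_combination (norm := module) -ZModModule.add_self (ofWord (⟨v, g⟩ :: w)) -
      ZModModule.add_self (ofWord (⟨v, h⟩ :: w))

variable (Γ G) in
noncomputable def relations (n : ℕ) : Submodule (ZMod 2) (WordSpace G) :=
  Submodule.span (ZMod 2)
    ({m | ∃ (a b : List (Σ v, G v)) (x y : Σ v, G v), Γ.Adj x.1 y.1 ∧
        m = ofWord (a ++ x :: y :: b) + ofWord (a ++ y :: x :: b)} ∪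
      ofWord '' {w | (∃ x ∈ w, x.2 = 1) ∨ n < w.length})

variable {n : ℕ}

theorem swap_mem_relations {x y : Σ v, G v} (hxy : Γ.Adj x.1 y.1) (a b : List (Σ v, G v)) :
    ofWord (a ++ x :: y :: b) + ofWord (a ++ y :: x :: b) ∈ relations Γ G n :=
  Submodule.subset_span (.inl ⟨a, b, x, y, hxy, rfl⟩)

theorem ofWord_mem_relations_of_eq_one {w : List (Σ v, G v)} {x : Σ v, G v} (hx : x ∈ w)
    (h1 : x.2 = 1) : ofWord w ∈ relations Γ G n :=
  Submodule.subset_span (.inr ⟨w, .inl ⟨x, hx, h1⟩, rfl⟩)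

theorem ofWord_mem_relations_of_lt_length {w : List (Σ v, G v)} (hw : n < w.length) :
    ofWord w ∈ relations Γ G n :=
  Submodule.subset_span (.inr ⟨w, .inr hw, rfl⟩)

theorem relations_le_comap {f : Module.End (ZMod 2) (WordSpace G)}
    (hswap : ∀ (a b : List (Σ v, G v)) (x y : Σ v, G v), Γ.Adj x.1 y.1 →
      f (ofWord (a ++ x :: y :: b)) + f (ofWord (a ++ y :: x :: b)) ∈ relations Γ G n)
    (hone : ∀ (w : List (Σ v, G v)), ∀ x ∈ w, x.2 = 1 → f (ofWord w) ∈ relations Γ G n)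
    (hlen : ∀ (w : List (Σ v, G v)), n < w.length → f (ofWord w) ∈ relations Γ G n) :
    relations Γ G n ≤ (relations Γ G n).comap f := by
  refine Submodule.span_le.2 ?_
  rintro _ (⟨a, b, x, y, hxy, rfl⟩ | ⟨w, ⟨x, hx, h1⟩ | hw, rfl⟩)
  · simpa using hswap a b x y hxy
  · exact hone w x hx h1
  · exact hlen w hw

theorem lcons_mem_relations (x : Σ v, G v) {m : WordSpace G} (hm : m ∈ relations Γ G n) :
    lcons x m ∈ relations Γ G n := by
  refine relations_le_comap (fun a b y z hyz => ?_) (fun w y hy h1 => ?_) (fun w hw => ?_) hm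
  · simpa using swap_mem_relations hyz (x :: a) b
  · simpa using ofWord_mem_relations_of_eq_one (List.mem_cons_of_mem x hy) h1
  · simpa using ofWord_mem_relations_of_lt_length (by simp; omega)

theorem lcons_mem_relations_of_eq_one {x : Σ v, G v} (h1 : x.2 = 1) (m : WordSpace G) :
    lcons x m ∈ relations Γ G n :=
  WordSpace.map_mem_of_forall _ (fun w => by
    simpa using ofWord_mem_relations_of_eq_one List.mem_cons_self h1) m

theorem lcons_lcons_add_mem_relations {x y : Σ v, G v} (hxy : Γ.Adj x.1 y.1) (m : WordSpace G) :
    lcons x (lcons y m) + lcons y (lcons x m) ∈ relations Γ G n :=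
  WordSpace.map_mem_of_forall (lcons x * lcons y + lcons y * lcons x) (fun w => by
    simpa using swap_mem_relations hxy [] w) m

theorem merge_mem_relations_of_lt_length {v : V} (g : G v) {w : List (Σ v, G v)}
    (hw : n < w.length) : merge v g w ∈ relations Γ G n :=
  spanWords_le (fun s hs => ofWord_mem_relations_of_lt_length hs)
    (merge_mem_spanWords g fun s hs => by
      change n < s.length
      rwa [← List.length_map (f := Sigma.fst), hs, List.length_map])

theorem merge_mem_relations_of_eq_one {v : V} (g : G v) {x : Σ v, G v} (h1 : x.2 = 1) :
    ∀ {w : List (Σ v, G v)}, x ∈ w → merge v g w ∈ relations Γ G n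
  | ⟨u, a⟩ :: w, hx => by
    by_cases hu : u = v
    · subst hu
      rw [merge_cons_self]
      rcases List.mem_cons.1 hx with rfl | hx
      · obtain rfl : a = 1 := h1
        simpa [ZModModule.add_self] using
          ofWord_mem_relations_of_eq_one (n := n) (Γ := Γ) (x := ⟨u, 1⟩) List.mem_cons_self rfl
      · refine add_mem (add_mem ?_ ?_) ?_ <;>
          exact ofWord_mem_relations_of_eq_one (List.mem_cons_of_mem _ hx) h1
    · rw [merge_cons_of_ne g a hu]
      rcases List.mem_cons.1 hx with rfl | hx
      · exact lcons_mem_relations_of_eq_one h1 _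
      · exact lcons_mem_relations _ (merge_mem_relations_of_eq_one g h1 hx)

theorem merge_cons_cons_add_mem_relations {v : V} (g a : G v) {y : Σ v, G v}
    (hy : Γ.Adj v y.1) (b : List (Σ v, G v)) :
    merge v g (⟨v, a⟩ :: y :: b) + merge v g (y :: ⟨v, a⟩ :: b) ∈ relations Γ G n := by
  obtain ⟨u, c⟩ := y
  simp only [merge_cons_self, merge_cons_of_ne g c hy.ne.symm, map_add, lcons_ofWord]
  convert add_mem (add_mem (swap_mem_relations (x := ⟨v, g * a⟩) (n := n) hy [] b)
    (swap_mem_relations (x := ⟨v, g⟩) hy [] b)) (swap_mem_relations (x := ⟨v, a⟩) hy [] b)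
    using 1
  simp only [List.nil_append]
  abel

theorem merge_swap_mem_relations {v : V} (g : G v) {x y : Σ v, G v} (hxy : Γ.Adj x.1 y.1)
    (b : List (Σ v, G v)) :
    ∀ a, merge v g (a ++ x :: y :: b) + merge v g (a ++ y :: x :: b) ∈ relations Γ G n
  | [] => by
    obtain ⟨xv, xa⟩ := x
    obtain ⟨yv, ya⟩ := y
    by_cases hx : xv = v
    · subst hx
      exact merge_cons_cons_add_mem_relations g xa hxy b
    by_cases hy : yv = v
    · subst hy
      rw [add_comm]
      exact merge_cons_cons_add_mem_relations g ya hxy.symm b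
    · simpa [merge_cons_of_ne g _ hx, merge_cons_of_ne g _ hy] using
        lcons_lcons_add_mem_relations hxy (merge v g b)
  | ⟨u, c⟩ :: a => by
    by_cases hu : u = v
    · subst hu
      simp only [List.cons_append, merge_cons_self]
      convert add_mem (add_mem (swap_mem_relations hxy (⟨u, g * c⟩ :: a) b)
        (swap_mem_relations hxy (⟨u, g⟩ :: a) b)) (swap_mem_relations hxy (⟨u, c⟩ :: a) b)
        using 1
      simp only [List.cons_append]
      abel
    · simpa [merge_cons_of_ne g c hu] using
        lcons_mem_relations ⟨u, c⟩ (merge_swap_mem_relations g hxy b a)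

theorem act_mem_relations {v : V} (g : G v) {m : WordSpace G} (hm : m ∈ relations Γ G n) :
    act Γ v g m ∈ relations Γ G n := by
  refine relations_le_comap (fun a b x y hxy => ?_) (fun w x hx h1 => ?_) (fun w hw => ?_) hm
  · by_cases hw : HasInitial Γ v (a ++ x :: y :: b)
    · rw [act_ofWord_of_hasInitial g hw,
        act_ofWord_of_hasInitial g ((hasInitial_append_swap hxy b a).1 hw)]
      exact merge_swap_mem_relations g hxy b a
    · rw [act_ofWord_of_not_hasInitial g hw,
        act_ofWord_of_not_hasInitial g (mt (hasInitial_append_swap hxy b a).2 hw)]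
      exact swap_mem_relations hxy (⟨v, g⟩ :: a) b
  · by_cases hw : HasInitial Γ v w
    · rw [act_ofWord_of_hasInitial g hw]
      exact merge_mem_relations_of_eq_one g h1 hx
    · rw [act_ofWord_of_not_hasInitial g hw]
      exact ofWord_mem_relations_of_eq_one (List.mem_cons_of_mem _ hx) h1
  · by_cases hw' : HasInitial Γ v w
    · rw [act_ofWord_of_hasInitial g hw']
      exact merge_mem_relations_of_lt_length g hw
    · rw [act_ofWord_of_not_hasInitial g hw']
      exact ofWord_mem_relations_of_lt_length (by simp; omega)

theorem merge_one_mem_relations (v : V) : ∀ w : List (Σ v, G v), merge v 1 w ∈ relations Γ G n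
  | [] => zero_mem _
  | ⟨u, a⟩ :: w => by
    by_cases hu : u = v
    · subst hu
      rw [merge_cons_self, one_mul, add_right_comm, ZModModule.add_self, zero_add]
      exact ofWord_mem_relations_of_eq_one List.mem_cons_self rfl
    · rw [merge_cons_of_ne _ a hu]
      exact lcons_mem_relations _ (merge_one_mem_relations v w)

theorem act_one_mem_relations (v : V) (m : WordSpace G) : act Γ v 1 m ∈ relations Γ G n := by
  refine WordSpace.map_mem_of_forall _ (fun w => ?_) m
  by_cases hw : HasInitial Γ v w
  · rw [act_ofWord_of_hasInitial 1 hw]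
    exact merge_one_mem_relations v w
  · rw [act_ofWord_of_not_hasInitial 1 hw]
    exact ofWord_mem_relations_of_eq_one List.mem_cons_self rfl

theorem act_act_ofWord_comm {u v : V} (huv : Γ.Adj u v) (g : G u) (h : G v)
    {w : List (Σ v, G v)} (hw : HasInitial Γ u w) :
    act Γ u g (act Γ v h (ofWord w)) = act Γ v h (act Γ u g (ofWord w)) := by
  rw [act_ofWord_of_hasInitial g hw]
  by_cases hv : HasInitial Γ v w
  · rw [act_ofWord_of_hasInitial h hv, act_merge_of_hasInitial g h hw,
      act_merge_of_hasInitial h g hv, lmerge_merge_comm g h huv.ne]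
  · rw [act_ofWord_of_not_hasInitial h hv, act_merge_of_not_hasInitial h g hv,
      act_ofWord_of_hasInitial g (w := ⟨v, h⟩ :: w) (Or.inr ⟨huv, hw⟩),
      merge_cons_of_ne g h huv.ne.symm]

theorem act_comm_mem_relations {u v : V} (huv : Γ.Adj u v) (g : G u) (h : G v)
    (m : WordSpace G) : act Γ u g (act Γ v h m) + act Γ v h (act Γ u g m) ∈ relations Γ G n := by
  refine WordSpace.map_mem_of_forall (act Γ u g * act Γ v h + act Γ v h * act Γ u g)
    (fun w => ?_) m
  simp only [LinearMap.add_apply, Module.End.mul_apply]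
  by_cases hu : HasInitial Γ u w
  · rw [act_act_ofWord_comm huv g h hu, ZModModule.add_self]
    exact zero_mem _
  by_cases hv : HasInitial Γ v w
  · rw [act_act_ofWord_comm huv.symm h g hv, ZModModule.add_self]
    exact zero_mem _
  · rw [act_ofWord_of_not_hasInitial h hv, act_ofWord_of_not_hasInitial g hu,
      act_ofWord_of_not_hasInitial g (by rintro (e | ⟨-, h'⟩); exacts [huv.ne e.symm, hu h']),
      act_ofWord_of_not_hasInitial h (by rintro (e | ⟨-, h'⟩); exacts [huv.ne e, hv h'])]
    exact swap_mem_relations huv [] w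

variable (Γ G) in
abbrev TruncSpace (n : ℕ) := WordSpace G ⧸ relations Γ G n

variable (Γ) in
noncomputable def actQ (n : ℕ) (v : V) (g : G v) : Module.End (ZMod 2) (TruncSpace Γ G n) :=
  (relations Γ G n).mapQ _ (act Γ v g) fun _ => act_mem_relations g

theorem actQ_mk (v : V) (g : G v) (m : WordSpace G) :
    actQ Γ n v g (Submodule.Quotient.mk m) = Submodule.Quotient.mk (act Γ v g m) :=
  rfl

theorem actQ_one (v : V) : actQ Γ n v (1 : G v) = 0 :=
  Submodule.linearMap_qext _ <| LinearMap.ext fun m =>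
    (Submodule.Quotient.mk_eq_zero _).2 (act_one_mem_relations v m)

theorem actQ_mul {v : V} (g h : G v) :
    actQ Γ n v (g * h) = actQ Γ n v g * actQ Γ n v h + actQ Γ n v g + actQ Γ n v h :=
  Submodule.linearMap_qext _ <| LinearMap.ext fun m => by simp [actQ_mk, act_mul]

theorem actQ_commute {u v : V} (huv : Γ.Adj u v) (g : G u) (h : G v) :
    Commute (actQ Γ n u g) (actQ Γ n v h) :=
  Submodule.linearMap_qext _ <| LinearMap.ext fun m => by
    simpa [actQ_mk, Submodule.Quotient.eq, ZModModule.sub_eq_add] using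
      act_comm_mem_relations huv g h m

variable (Γ) in
noncomputable def vertexRep (n : ℕ) (v : V) : G v →* (Module.End (ZMod 2) (TruncSpace Γ G n))ˣ :=
  MonoidHom.toHomUnits
    { toFun g := 1 + actQ Γ n v g
      map_one' := by rw [actQ_one, add_zero]
      map_mul' g h := by rw [actQ_mul]; noncomm_ring }

variable (Γ G) in
noncomputable def rep (n : ℕ) : GraphProduct Γ G →* (Module.End (ZMod 2) (TruncSpace Γ G n))ˣ :=
  lift (vertexRep Γ n) fun _ _ huv g h => Commute.units_of_val <|
    ((Commute.one_left _).add_left (Commute.one_right _)).add_right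
      ((Commute.one_left _).add_left (actQ_commute huv g h))

theorem rep_mk_of_apply {v : V} (g : G v) (m : WordSpace G) :
    (rep Γ G n (mk Γ (CoprodI.of g)) : Module.End (ZMod 2) (TruncSpace Γ G n))
      (Submodule.Quotient.mk m) = Submodule.Quotient.mk (m + act Γ v g m) := by
  rw [rep, lift_mk, CoprodI.lift_of]
  simp [vertexRep, actQ_mk]

theorem act_mem_spanWords_length_lt {v : V} (g : G v) {d : ℕ} {m : WordSpace G}
    (hm : m ∈ spanWords {t | t.length < d}) :
    act Γ v g m ∈ spanWords {t | t.length < d + 1} := by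
  refine spanWords_le (p := (spanWords _).comap (act Γ v g)) (fun t ht => ?_) hm
  by_cases hinit : HasInitial Γ v t
  · rw [Submodule.mem_comap, act_ofWord_of_hasInitial g hinit]
    refine merge_mem_spanWords g fun s hs => ?_
    change s.length < d + 1
    rw [← List.length_map (f := Sigma.fst), hs, List.length_map]
    exact ht.trans (Nat.lt_succ_self d)
  · rw [Submodule.mem_comap, act_ofWord_of_not_hasInitial g hinit]
    exact ofWord_mem_spanWords (Nat.succ_lt_succ ht)

theorem exists_rep_mk_wordProd_apply : ∀ {w : List (Σ v, G v)}, IsReduced Γ w →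
    ∃ j ∈ spanWords {t | t.length < w.length},
      (rep Γ G n (mk Γ (wordProd w)) : Module.End (ZMod 2) (TruncSpace Γ G n))
        (Submodule.Quotient.mk (ofWord [])) = Submodule.Quotient.mk (ofWord w + j)
  | [], _ => ⟨0, zero_mem _, by simp⟩
  | ⟨v, a⟩ :: w, ⟨_, hinit, hw⟩ => by
    obtain ⟨j, hj, hrep⟩ := exists_rep_mk_wordProd_apply hw
    have hj' : j ∈ spanWords {t | t.length < w.length + 1} :=
      spanWords_le (fun t ht => ofWord_mem_spanWords (Nat.lt_succ_of_lt ht)) hj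
    refine ⟨ofWord w + j + act Γ v a j,
      add_mem (add_mem (ofWord_mem_spanWords (Nat.lt_succ_self _)) hj')
        (act_mem_spanWords_length_lt a hj), ?_⟩
    rw [wordProd_cons, map_mul, map_mul, Units.val_mul, Module.End.mul_apply, hrep,
      rep_mk_of_apply, map_add, act_ofWord_of_not_hasInitial a hinit]
    congr 1
    abel

open Classical in
noncomputable def topCoeff (n : ℕ) : WordSpace G →ₗ[ZMod 2] ZMod 2 :=
  Finsupp.linearCombination (ZMod 2) fun w => if w.length = n ∧ ∀ x ∈ w, x.2 ≠ 1 then 1 else 0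

open Classical in
theorem topCoeff_ofWord (w : List (Σ v, G v)) :
    topCoeff n (ofWord w) = if w.length = n ∧ ∀ x ∈ w, x.2 ≠ 1 then 1 else 0 := by
  simp [topCoeff, ofWord]

theorem relations_le_ker_topCoeff : relations Γ G n ≤ LinearMap.ker (topCoeff n) := by
  refine Submodule.span_le.2 ?_
  rintro _ (⟨a, b, x, y, -, rfl⟩ | ⟨w, ⟨x, hx, h1⟩ | hw, rfl⟩)
  · have hp : (a ++ x :: y :: b).Perm (a ++ y :: x :: b) := (List.Perm.swap y x b).append_left a
    have hc : ((a ++ x :: y :: b).length = n ∧ ∀ z ∈ a ++ x :: y :: b, z.2 ≠ 1) ↔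
        ((a ++ y :: x :: b).length = n ∧ ∀ z ∈ a ++ y :: x :: b, z.2 ≠ 1) := by
      rw [hp.length_eq]
      exact and_congr_right fun _ => forall_congr' fun z => by rw [hp.mem_iff]
    rw [SetLike.mem_coe, LinearMap.mem_ker, map_add, topCoeff_ofWord, topCoeff_ofWord]
    by_cases h : (a ++ x :: y :: b).length = n ∧ ∀ z ∈ a ++ x :: y :: b, z.2 ≠ 1
    · rw [if_pos h, if_pos (hc.1 h), ZModModule.add_self]
    · rw [if_neg h, if_neg (mt hc.2 h), add_zero]
  · rw [SetLike.mem_coe, LinearMap.mem_ker, topCoeff_ofWord, if_neg fun h => h.2 x hx h1]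
  · rw [SetLike.mem_coe, LinearMap.mem_ker, topCoeff_ofWord, if_neg fun h => hw.ne' h.1]

theorem topCoeff_eq_zero {m : WordSpace G} (hm : m ∈ spanWords {t | t.length < n}) :
    topCoeff n m = 0 :=
  spanWords_le (p := LinearMap.ker (topCoeff n))
    (fun t ht => by simp [topCoeff_ofWord, Nat.ne_of_lt ht]) hm

theorem rep_mk_wordProd_ne_one {w : List (Σ v, G v)} (hw : IsReduced Γ w) (hne : w ≠ []) :
    rep Γ G w.length (mk Γ (wordProd w)) ≠ 1 := by
  intro h1
  obtain ⟨j, hj, hrep⟩ := exists_rep_mk_wordProd_apply (n := w.length) hw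
  rw [h1, Units.val_one, Module.End.one_apply, eq_comm, Submodule.Quotient.eq] at hrep
  have := relations_le_ker_topCoeff hrep
  rw [LinearMap.mem_ker, map_sub, map_add, topCoeff_ofWord, topCoeff_ofWord, topCoeff_eq_zero hj,
    if_pos ⟨rfl, hw.ne_one⟩, if_neg fun h => hne (List.length_eq_zero_iff.1 h.1.symm)] at this
  simp at this

theorem finite_truncSpace (hfin : {x : Σ v, G v | x.2 ≠ 1}.Finite) (n : ℕ) :
    Finite (TruncSpace Γ G n) := by
  set S := {w : List (Σ v, G v) | w.length ≤ n ∧ ∀ x ∈ w, x.2 ≠ 1}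
  have hS : S.Finite := by
    have : Finite {x : Σ v, G v // x.2 ≠ 1} := hfin.to_subtype
    refine ((List.finite_length_le {x : Σ v, G v // x.2 ≠ 1} n).image
      (List.map Subtype.val)).subset ?_
    rintro w ⟨hlen, hw⟩
    lift w to List {x : Σ v, G v // x.2 ≠ 1} using hw
    exact ⟨w, by simpa using hlen, rfl⟩
  have : Module.Finite (ZMod 2) (TruncSpace Γ G n) := by
    refine ⟨⟨(hS.image fun w => (relations Γ G n).mkQ (ofWord w)).toFinset, ?_⟩⟩
    rw [Set.Finite.coe_toFinset, eq_top_iff]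
    rintro z -
    obtain ⟨m, rfl⟩ := (relations Γ G n).mkQ_surjective z
    refine WordSpace.map_mem_of_forall _ (fun w => ?_) m
    by_cases hw : w ∈ S
    · exact Submodule.subset_span ⟨w, hw, rfl⟩
    · rw [Submodule.mkQ_apply, (Submodule.Quotient.mk_eq_zero _).2 ?_]
      · exact zero_mem _
      simp only [S, Set.mem_ofPred_eq, not_and_or, not_le, not_forall, not_not] at hw
      obtain hlen | ⟨x, hx, h1⟩ := hw
      exacts [ofWord_mem_relations_of_lt_length hlen, ofWord_mem_relations_of_eq_one hx h1]
  exact Module.finite_of_finite (ZMod 2)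

theorem exists_finite_quotients (hres : ∀ v, ResiduallyFinite (G v)) (w : List (Σ v, G v))
    (hw : ∀ x ∈ w, x.2 ≠ 1) :
    ∃ (H : V → Type u) (_ : ∀ v, Group (H v)) (φ : ∀ v, G v →* H v),
      {x : Σ v, H v | x.2 ≠ 1}.Finite ∧ ∀ x ∈ w, φ x.1 x.2 ≠ 1 := by
  choose Q _ φ hQ _ hφ using fun x : {x // x ∈ w} => hres x.1.1 x.1.2 (hw x.1 x.2)
  -- `H v` is the product of the chosen quotients over the letters of `w` at `v`: it is trivial
  -- at every vertex that does not occur in `w`.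
  have (v : V) : Finite {g : G v // ⟨v, g⟩ ∈ w} :=
    (w.finite_toSet.preimage sigma_mk_injective.injOn).to_subtype
  refine ⟨fun v => ∀ g : {g : G v // ⟨v, g⟩ ∈ w}, Q ⟨⟨v, g⟩, g.2⟩, fun v => inferInstance,
    fun v => MonoidHom.pi fun g : {g : G v // ⟨v, g⟩ ∈ w} => φ ⟨⟨v, g⟩, g.2⟩, ?_, ?_⟩
  · refine ((w.finite_toSet.image Sigma.fst).biUnion fun v _ =>
      Set.finite_range (Sigma.mk v)).subset ?_
    rintro ⟨v, h⟩ hh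
    simp only [Set.mem_iUnion]
    refine ⟨v, ?_, h, rfl⟩
    by_contra hv
    exact hh (funext fun g => (hv ⟨_, g.2, rfl⟩).elim)
  · rintro ⟨v, g⟩ hx h1
    exact hφ ⟨_, hx⟩ (congrFun h1 ⟨g, hx⟩)

end Representation

end GraphProduct

/-- Graph products of residually finite groups are residually finite. -/
theorem graphProduct_residuallyFinite
    {V : Type u} (Γ : SimpleGraph V) (G : V → Type u) [∀ v, Group (G v)]
    (hres : ∀ v, ResiduallyFinite (G v)) :
    ResiduallyFinite (GraphProduct Γ G) := by
  refine residuallyFinite_of_forall_exists_finite fun x hx => ?_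
  obtain ⟨w, hw, rfl⟩ := GraphProduct.exists_isReduced x
  have hne : w ≠ [] := by rintro rfl; exact hx (map_one _)
  obtain ⟨H, _, φ, hfin, hφ⟩ := GraphProduct.exists_finite_quotients hres w hw.ne_one
  have := GraphProduct.finite_truncSpace (Γ := Γ) hfin w.length
  refine ⟨_, _, finite_units_end,
    (GraphProduct.rep Γ H w.length).comp (GraphProduct.map Γ φ), ?_⟩
  rw [MonoidHom.comp_apply, GraphProduct.map_mk_wordProd]
  have := GraphProduct.rep_mk_wordProd_ne_one (hw.map φ hφ) (by simpa using hne)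
  rwa [List.length_map] at this
end
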